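/- For all stacked star expressions E, E' over A and actions a ∈ A: if E↓ is derivable in T̲^(*)(A), then E is a star expression and E↓ is derivable in Milner's TSS T(A); and if E →a E' is derivable in T̲^(*)(A) (with proper action label a ∈ A), then π(E) →a π(E') is derivable in T(A). -/

import Mathlib

universe u v w

/-- Star expressions over a set `A` of actions. -/
inductive StExp (A : Type u) : Type u
  | zero : StExp A
  | one : StExp A
  | act : A → StExp A
  | add : StExp A → StExp A → StExp A
  | mul : StExp A → StExp A → StExp A
  | star : StExp A → StExp A

namespace StExp

variable {A : Type u}

/-- Immediate termination in Milner's TSS `T(A)`. -/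
inductive Term : StExp A → Prop
  | one : Term StExp.one
  | addL {e₁ e₂ : StExp A} : Term e₁ → Term (StExp.add e₁ e₂)
  | addR {e₁ e₂ : StExp A} : Term e₂ → Term (StExp.add e₁ e₂)
  | mul {e₁ e₂ : StExp A} : Term e₁ → Term e₂ → Term (StExp.mul e₁ e₂)
  | star {e : StExp A} : Term (StExp.star e)

/-- Transitions in Milner's TSS `T(A)`. -/
inductive Step : StExp A → A → StExp A → Prop
  | act {a : A} : Step (StExp.act a) a StExp.one
  | addL {e₁ e₂ e' : StExp A} {a : A} : Step e₁ a e' → Step (StExp.add e₁ e₂) a e'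
  | addR {e₁ e₂ e' : StExp A} {a : A} : Step e₂ a e' → Step (StExp.add e₁ e₂) a e'
  | mulL {e₁ e₂ e₁' : StExp A} {a : A} :
      Step e₁ a e₁' → Step (StExp.mul e₁ e₂) a (StExp.mul e₁' e₂)
  | mulR {e₁ e₂ e₂' : StExp A} {a : A} :
      Term e₁ → Step e₂ a e₂' → Step (StExp.mul e₁ e₂) a e₂'
  | star {e e' : StExp A} {a : A} :
      Step e a e' → Step (StExp.star e) a (StExp.mul e' (StExp.star e))

/-- (Syntactic) star height. -/
def height : StExp A → ℕ
  | .zero => 0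
  | .one => 0
  | .act _ => 0
  | .add e₁ e₂ => max e₁.height e₂.height
  | .mul e₁ e₂ => max e₁.height e₂.height
  | .star e => e.height + 1

end StExp

/-- Stacked star expressions: `E ::= e | E·e | E * e*`. -/
inductive SExp (A : Type u) : Type u
  | up : StExp A → SExp A
  | pr : SExp A → StExp A → SExp A
  | st : SExp A → StExp A → SExp A

namespace SExp

variable {A : Type u}

/-- Projection to star expressions, interpreting `*` as `·`. -/
def proj : SExp A → StExp A
  | .up e => e
  | .pr E e => StExp.mul E.proj e
  | .st E e => StExp.mul E.proj (StExp.star e)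

/-- `E` is a star expression (contains no stacked product `*`). -/
def IsStExp : SExp A → Prop
  | .up _ => True
  | .pr E _ => IsStExp E
  | .st _ _ => False

/-- Star expressions that are not products (canonical arguments of `up`). -/
def UpOk : StExp A → Prop
  | .mul _ _ => False
  | _ => True

/-- Canonical stacked star expressions: products of star expressions are
represented by `pr` rather than by `up` applied to `StExp.mul`. -/
def Canonical : SExp A → Prop
  | .up e => UpOk e
  | .pr E _ => Canonical E
  | .st E _ => Canonical E

/-- Canonical embedding of star expressions into stacked star expressions. -/
def flatUp : StExp A → SExp A
  | .mul e₁ e₂ => SExp.pr (flatUp e₁) e₂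
  | e => SExp.up e

/-- Immediate termination for stacked star expressions (TSS `T̲^(*)(A)`). -/
inductive STerm : SExp A → Prop
  | up {e : StExp A} : StExp.Term e → STerm (SExp.up e)
  | pr {E : SExp A} {e : StExp A} : STerm E → StExp.Term e → STerm (SExp.pr E e)

/-- Transitions of the TSS `T̲^(*)(A)`; labels in `Option A`, where `none`
is the empty-step label `1`. -/
inductive SStep : SExp A → Option A → SExp A → Prop
  | act {a : A} : SStep (SExp.up (StExp.act a)) (some a) (SExp.up StExp.one)
  | addL {e₁ e₂ : StExp A} {a : A} {E' : SExp A} :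
      SStep (SExp.up e₁) (some a) E' → SStep (SExp.up (StExp.add e₁ e₂)) (some a) E'
  | addR {e₁ e₂ : StExp A} {a : A} {E' : SExp A} :
      SStep (SExp.up e₂) (some a) E' → SStep (SExp.up (StExp.add e₁ e₂)) (some a) E'
  | upMulL {e₁ e₂ : StExp A} {l : Option A} {E₁' : SExp A} :
      SStep (SExp.up e₁) l E₁' → SStep (SExp.up (StExp.mul e₁ e₂)) l (SExp.pr E₁' e₂)
  | upMulR {e₁ e₂ : StExp A} {a : A} {E₂' : SExp A} :
      StExp.Term e₁ → SStep (SExp.up e₂) (some a) E₂' →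
      SStep (SExp.up (StExp.mul e₁ e₂)) (some a) E₂'
  | upStar {e : StExp A} {a : A} {E' : SExp A} :
      SStep (SExp.up e) (some a) E' →
      SStep (SExp.up (StExp.star e)) (some a) (SExp.st E' e)
  | prL {E₁ E₁' : SExp A} {e₂ : StExp A} {l : Option A} :
      SStep E₁ l E₁' → SStep (SExp.pr E₁ e₂) l (SExp.pr E₁' e₂)
  | prR {E₁ E₂' : SExp A} {e₂ : StExp A} {a : A} :
      STerm E₁ → SStep (SExp.up e₂) (some a) E₂' → SStep (SExp.pr E₁ e₂) (some a) E₂'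
  | stL {E₁ E₁' : SExp A} {e₂ : StExp A} {l : Option A} :
      SStep E₁ l E₁' → SStep (SExp.st E₁ e₂) l (SExp.st E₁' e₂)
  | stOne {E₁ : SExp A} {e₂ : StExp A} :
      STerm E₁ → SStep (SExp.st E₁ e₂) none (SExp.up (StExp.star e₂))

/-- `1`-transition. -/
def OneStep (E F : SExp A) : Prop := SStep E none F

/-- Transition with an arbitrary label in `A ∪ {1}`. -/
def AStep (E F : SExp A) : Prop := ∃ l, SStep E l F

/-- Induced (proper) transition `E ⇒a E'`: a sequence of `1`-transitions
followed by an `a`-transition. -/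
def IStep (E : SExp A) (a : A) (E' : SExp A) : Prop :=
  ∃ F, Relation.ReflTransGen OneStep E F ∧ SStep F (some a) E'

/-- Induced termination `E ↓(1)`: a sequence of `1`-transitions ending in a
terminating expression. -/
def ITerm (E : SExp A) : Prop :=
  ∃ F, Relation.ReflTransGen OneStep E F ∧ STerm F

/-- `E` is normed: a path to an expression with immediate termination. -/
def Normed (E : SExp A) : Prop :=
  ∃ F, Relation.ReflTransGen AStep E F ∧ STerm F

/-- `E` is normed⁺: a nonempty sequence of induced transitions to an
expression with induced termination. -/
def NormedP (E : SExp A) : Prop :=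
  ∃ F, Relation.TransGen (fun X Y => ∃ a : A, IStep X a Y) E F ∧ ITerm F

/-- Induced termination as derived in the extension `T̲ind^(*)(A)`. -/
inductive IndTerm : SExp A → Prop
  | base {E : SExp A} : STerm E → IndTerm E
  | step {E F : SExp A} : SStep E none F → IndTerm F → IndTerm E

/-- Induced transitions as derived in the extension `T̲ind^(*)(A)`. -/
inductive IndStep : SExp A → A → SExp A → Prop
  | base {E E' : SExp A} {a : A} : SStep E (some a) E' → IndStep E a E'
  | step {E F E' : SExp A} {a : A} : SStep E none F → IndStep F a E' → IndStep E a E'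

/-- Marked transitions of the TSS `T̲̂^(*)(A)`: marking label `0` means a body
(`bo`) transition, `n ≥ 1` a loop-entry transition of level `n`. -/
inductive MStep : SExp A → Option A × ℕ → SExp A → Prop
  | act {a : A} : MStep (SExp.up (StExp.act a)) (some a, 0) (SExp.up StExp.one)
  | addL {e₁ e₂ : StExp A} {a : A} {n : ℕ} {E' : SExp A} :
      MStep (SExp.up e₁) (some a, n) E' → MStep (SExp.up (StExp.add e₁ e₂)) (some a, 0) E'
  | addR {e₁ e₂ : StExp A} {a : A} {n : ℕ} {E' : SExp A} :
      MStep (SExp.up e₂) (some a, n) E' → MStep (SExp.up (StExp.add e₁ e₂)) (some a, 0) E'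
  | upMulL {e₁ e₂ : StExp A} {l : Option A × ℕ} {E₁' : SExp A} :
      MStep (SExp.up e₁) l E₁' → MStep (SExp.up (StExp.mul e₁ e₂)) l (SExp.pr E₁' e₂)
  | upMulR {e₁ e₂ : StExp A} {a : A} {n : ℕ} {E₂' : SExp A} :
      StExp.Term e₁ → MStep (SExp.up e₂) (some a, n) E₂' →
      MStep (SExp.up (StExp.mul e₁ e₂)) (some a, 0) E₂'
  | upStarP {e : StExp A} {a : A} {n : ℕ} {E' : SExp A} :
      NormedP (SExp.up e) → MStep (SExp.up e) (some a, n) E' →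
      MStep (SExp.up (StExp.star e)) (some a, e.height + 1) (SExp.st E' e)
  | upStarN {e : StExp A} {a : A} {n : ℕ} {E' : SExp A} :
      ¬ NormedP (SExp.up e) → MStep (SExp.up e) (some a, n) E' →
      MStep (SExp.up (StExp.star e)) (some a, 0) (SExp.st E' e)
  | prL {E₁ E₁' : SExp A} {e₂ : StExp A} {l : Option A × ℕ} :
      MStep E₁ l E₁' → MStep (SExp.pr E₁ e₂) l (SExp.pr E₁' e₂)
  | prR {E₁ E₂' : SExp A} {e₂ : StExp A} {a : A} {n : ℕ} :
      STerm E₁ → MStep (SExp.up e₂) (some a, n) E₂' →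
      MStep (SExp.pr E₁ e₂) (some a, 0) E₂'
  | stL {E₁ E₁' : SExp A} {e₂ : StExp A} {l : Option A × ℕ} :
      MStep E₁ l E₁' → MStep (SExp.st E₁ e₂) l (SExp.st E₁' e₂)
  | stOne {E₁ : SExp A} {e₂ : StExp A} :
      STerm E₁ → MStep (SExp.st E₁ e₂) (none, 0) (SExp.up (StExp.star e₂))

/-- Body transition `→bo`. -/
def BStep (E F : SExp A) : Prop := ∃ l : Option A, MStep E (l, 0) F

/-- Star height of stacked star expressions. -/
def heightS : SExp A → ℕ
  | .up e => e.height
  | .pr E e => max E.heightS e.height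
  | .st E e => max E.heightS (e.height + 1)

end SExp

/-- Applicative contexts of stacked star expressions. -/
inductive AppCtx (A : Type u) : Type u
  | hole : AppCtx A
  | pr : AppCtx A → StExp A → AppCtx A
  | st : AppCtx A → StExp A → AppCtx A

/-- Filling the hole of an applicative context. -/
def AppCtx.fill {A : Type u} : AppCtx A → SExp A → SExp A
  | .hole, E => E
  | .pr C e, E => SExp.pr (C.fill E) e
  | .st C e, E => SExp.st (C.fill E) e

/-- A labeled transition system with termination. -/
structure LTS (S : Type u) (L : Type v) where
  step : S → L → S → Prop
  term : S → Prop

/-- Bisimulation between two LTSs with termination. -/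
def IsBisimulation {S₁ : Type u} {S₂ : Type v} {L : Type w}
    (M₁ : LTS S₁ L) (M₂ : LTS S₂ L) (B : S₁ → S₂ → Prop) : Prop :=
  (∃ s₁ s₂, B s₁ s₂) ∧
  ∀ s₁ s₂, B s₁ s₂ →
    ((∀ a s₁', M₁.step s₁ a s₁' → ∃ s₂', M₂.step s₂ a s₂' ∧ B s₁' s₂') ∧
     (∀ a s₂', M₂.step s₂ a s₂' → ∃ s₁', M₁.step s₁ a s₁' ∧ B s₁' s₂') ∧
     (M₁.term s₁ ↔ M₂.term s₂))

/-- The star expressions LTS `L(StExp(A))`. -/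
def stexpLTS (A : Type u) : LTS (StExp A) A := ⟨StExp.Step, StExp.Term⟩

/-- The induced LTS of the stacked star expressions 1-LTS `L1(StExp^(*)(A))`. -/
def indSExpLTS (A : Type u) : LTS (SExp A) A := ⟨SExp.IStep, SExp.ITerm⟩

/-- A (rooted) chart. -/
structure Chart (V : Type u) (L : Type v) where
  verts : Set V
  start : V
  step : V → L → V → Prop
  term : V → Prop

/-- Bisimulation between two charts: a bisimulation between the underlying
LTSs that relates the start vertices. -/
def IsChartBisim {V₁ : Type u} {V₂ : Type v} {L : Type w}
    (C₁ : Chart V₁ L) (C₂ : Chart V₂ L) (B : V₁ → V₂ → Prop) : Prop :=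
  (∀ x y, B x y → x ∈ C₁.verts ∧ y ∈ C₂.verts) ∧
  B C₁.start C₂.start ∧
  ∀ x y, B x y →
    ((∀ a x', C₁.step x a x' → ∃ y', C₂.step y a y' ∧ B x' y') ∧
     (∀ a y', C₂.step y a y' → ∃ x', C₁.step x a x' ∧ B x' y') ∧
     (C₁.term x ↔ C₂.term y))

def ChartBisimilar {V₁ : Type u} {V₂ : Type v} {L : Type w}
    (C₁ : Chart V₁ L) (C₂ : Chart V₂ L) : Prop :=
  ∃ B, IsChartBisim C₁ C₂ B

/-- Star expressions reachable from `e` in Milner's LTS. -/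
def MReach {A : Type u} (e : StExp A) : Set (StExp A) :=
  {f | Relation.ReflTransGen (fun x y => ∃ a, StExp.Step x a y) e f}

/-- The chart interpretation `C(e)` of a star expression. -/
def chartInt {A : Type u} (e : StExp A) : Chart (StExp A) A where
  verts := MReach e
  start := e
  step x a y := x ∈ MReach e ∧ StExp.Step x a y
  term x := x ∈ MReach e ∧ StExp.Term x

/-- Stacked star expressions reachable from (the canonical representation of)
`e` in the 1-LTS. -/
def SReach {A : Type u} (e : StExp A) : Set (SExp A) :=
  {F | Relation.ReflTransGen SExp.AStep (SExp.flatUp e) F}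

/-- The 1-chart interpretation `C1(e)` of a star expression. -/
def oneChartInt {A : Type u} (e : StExp A) : Chart (SExp A) (Option A) where
  verts := SReach e
  start := SExp.flatUp e
  step x l y := x ∈ SReach e ∧ SExp.SStep x l y
  term x := x ∈ SReach e ∧ SExp.STerm x

/-- The entry/body-labeled 1-chart interpretation `Ĉ1(e)`. -/
def markedOneChartInt {A : Type u} (e : StExp A) : Chart (SExp A) (Option A × ℕ) where
  verts := SReach e
  start := SExp.flatUp e
  step x l y := x ∈ SReach e ∧ SExp.MStep x l y
  term x := x ∈ SReach e ∧ SExp.STerm x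

/-- The induced chart of a 1-chart: induced transitions and induced
termination. -/
def indChart {V : Type u} {A : Type v} (C : Chart V (Option A)) : Chart V A where
  verts := C.verts
  start := C.start
  step x a y := ∃ u, Relation.ReflTransGen (fun s t => C.step s none t) x u ∧ C.step u (some a) y
  term x := ∃ u, Relation.ReflTransGen (fun s t => C.step s none t) x u ∧ C.term u

/-- An infinite path from the start vertex of a chart. -/
def IsInfPathFrom {V : Type u} {L : Type v} (C : Chart V L) (p : ℕ → V) : Prop :=
  p 0 = C.start ∧ ∀ i, ∃ l, C.step (p i) l (p (i + 1))

/-- Loop chart: (L1) an infinite path from the start vertex exists, (L2) every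
infinite path from the start vertex returns to it after a positive number of
transitions, (L3) only the start vertex may terminate. -/
def IsLoopChart {V : Type u} {L : Type v} (C : Chart V L) : Prop :=
  (∃ p, IsInfPathFrom C p) ∧
  (∀ p, IsInfPathFrom C p → ∃ k, 0 < k ∧ p k = C.start) ∧
  (∀ w ∈ C.verts, C.term w → w = C.start)

namespace LLEE

variable {S : Type u} {L : Type v}

/-- Body transition of an entry/body-labeling. -/
def Body (step : S → L × ℕ → S → Prop) (x y : S) : Prop := ∃ l, step x (l, 0) y

/-- Entry transition of level `n` of an entry/body-labeling. -/
def Entry (step : S → L × ℕ → S → Prop) (n : ℕ) (x y : S) : Prop := ∃ l, step x (l, n) y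

/-- Vertices of the induced subchart at `(v, n)`: on paths that start with an
`→[n]` transition from `v`, continue with body transitions, and halt upon
revisiting `v`. -/
def loopVerts (step : S → L × ℕ → S → Prop) (v : S) (n : ℕ) : Set S :=
  insert v {w | ∃ u, Entry step n v u ∧
    Relation.ReflTransGen (fun x y => Body step x y ∧ x ≠ v) u w}

/-- The induced subchart at `(v, n)`. -/
def subchartAt (step : S → L × ℕ → S → Prop) (term : S → Prop) (v : S) (n : ℕ) :
    Chart S (L × ℕ) where
  verts := loopVerts step v n
  start := v
  step x l y :=
    (x = v ∧ l.2 = n ∧ step x l y) ∨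
    (x ∈ loopVerts step v n ∧ x ≠ v ∧ l.2 = 0 ∧ step x l y)
  term x := x ∈ loopVerts step v n ∧ term x

/-- LLEE-witness conditions (W1)–(W3) for an entry/body-labeled transition
system with transitions `step` and termination `term`. -/
def IsWitness (step : S → L × ℕ → S → Prop) (term : S → Prop) : Prop :=
  (¬ ∃ p : ℕ → S, ∀ i, Body step (p i) (p (i + 1))) ∧
  (∀ v n, 0 < n → (∃ w, Entry step n v w) → IsLoopChart (subchartAt step term v n)) ∧
  (∀ v n, 0 < n → (∃ w, Entry step n v w) →
    ∀ t, t ∈ loopVerts step v n → t ≠ v → ∀ m t', 0 < m → Entry step m t t' → m < n)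

end LLEE

namespace LEE

variable {V : Type u} {L : Type v}

/-- Vertices of the subchart generated from `v` by a set `U` of transitions
from `v`: paths start with a transition in `U` and continue (with arbitrary
transitions) until `v` is reached again. -/
def genVerts (C : Chart V L) (v : V) (U : Set (V × L × V)) : Set V :=
  insert v {w | ∃ u, (∃ l, (v, l, u) ∈ U) ∧
    Relation.ReflTransGen (fun x y => (∃ l, C.step x l y) ∧ x ≠ v) u w}

/-- The subchart generated from `v` by the transitions in `U`. -/
def genSubchart (C : Chart V L) (v : V) (U : Set (V × L × V)) : Chart V L where
  verts := genVerts C v U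
  start := v
  step x l y :=
    (x = v ∧ (v, l, y) ∈ U) ∨
    (x ∈ genVerts C v U ∧ x ≠ v ∧ C.step x l y)
  term x := x ∈ genVerts C v U ∧ C.term x

/-- `U` determines a loop subchart of `C` rooted at `v`. -/
def IsLoopSubchart (C : Chart V L) (v : V) (U : Set (V × L × V)) : Prop :=
  v ∈ C.verts ∧ U.Nonempty ∧
  (∀ t ∈ U, t.1 = v ∧ C.step t.1 t.2.1 t.2.2) ∧
  IsLoopChart (genSubchart C v U)

/-- Elimination of the loop-entry transitions in `U`, followed by removal of
all vertices and transitions that become unreachable. -/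
def elim (C : Chart V L) (U : Set (V × L × V)) : Chart V L :=
  let step' : V → L → V → Prop := fun x l y => C.step x l y ∧ (x, l, y) ∉ U
  let R : Set V := {w | Relation.ReflTransGen (fun x y => ∃ l, step' x l y) C.start w}
  { verts := C.verts ∩ R
    start := C.start
    step := fun x l y => step' x l y ∧ x ∈ R ∧ y ∈ R
    term := fun x => C.term x ∧ x ∈ R }

/-- One step of the loop elimination procedure. -/
def ElimStep (C C' : Chart V L) : Prop :=
  ∃ v U, IsLoopSubchart C v U ∧ C' = elim C U

/-- The chart has an infinite path. -/
def HasInfPath (C : Chart V L) : Prop :=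
  ∃ p : ℕ → V, p 0 ∈ C.verts ∧ ∀ i, ∃ l, C.step (p i) l (p (i + 1))

/-- The loop existence and elimination property LEE: repeated elimination of
loop subcharts results in a chart without an infinite path. -/
def SatisfiesLEE (C : Chart V L) : Prop :=
  ∃ C', Relation.ReflTransGen ElimStep C C' ∧ ¬ HasInfPath C'

end LEE

/-- A maximal path of body transitions from `X` in the entry/body-labeled
1-LTS: finite (of length `len`) or infinite (`len = ⊤`), and if finite then
not extensible by any further body transition. -/
structure BoPath (A : Type u) (X : SExp A) where
  len : ℕ∞
  f : ℕ → SExp A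
  head : f 0 = X
  steps : ∀ i : ℕ, (i : ℕ∞) < len → SExp.BStep (f i) (f (i + 1))
  maximal : ∀ n : ℕ, len = (n : ℕ∞) → ∀ Y, ¬ SExp.BStep (f n) Y

/-- Canonical stacked star expressions (the states of the stacked star
expressions 1-LTS `L1(StExp^(*)(A))`). -/
def CSExp (A : Type u) : Type u := {E : SExp A // SExp.Canonical E}

namespace SExp

variable {A : Type u}

theorem STerm.isStExp {E : SExp A} (h : STerm E) : IsStExp E := by
  induction h with
  | up => trivial
  | pr _ _ ih => exact ih

theorem STerm.term_proj {E : SExp A} (h : STerm E) : StExp.Term E.proj := by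
  induction h with
  | up h => exact h
  | pr _ h ih => exact .mul ih h

theorem SStep.step_proj {E E' : SExp A} {l : Option A} (h : SStep E l E') :
    ∀ a, l = some a → StExp.Step E.proj a E'.proj := by
  induction h with
  | act => rintro _ ⟨⟩; exact .act
  | addL _ ih => rintro _ ⟨⟩; exact .addL (ih _ rfl)
  | addR _ ih => rintro _ ⟨⟩; exact .addR (ih _ rfl)
  | upMulL _ ih => intro a ha; exact .mulL (ih a ha)
  | upMulR h₁ _ ih => rintro _ ⟨⟩; exact .mulR h₁ (ih _ rfl)
  | upStar _ ih => rintro _ ⟨⟩; exact .star (ih _ rfl)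
  | prL _ ih => intro a ha; exact .mulL (ih a ha)
  | prR h₁ _ ih => rintro _ ⟨⟩; exact .mulR h₁.term_proj (ih _ rfl)
  | stL _ ih => intro a ha; exact .mulL (ih a ha)
  | stOne => rintro _ ⟨⟩

end SExp

/-- If `E↓` is derivable in `T̲^(*)(A)` then `E` is a star
expression and `E↓` is derivable in `T(A)`; and proper transitions derivable
in `T̲^(*)(A)` project to transitions derivable in `T(A)`. -/
theorem Tstack_projects_to_Milner (A : Type u) :
    (∀ E : SExp A, SExp.STerm E → SExp.IsStExp E ∧ StExp.Term (SExp.proj E)) ∧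
    (∀ (E E' : SExp A) (a : A),
      SExp.SStep E (some a) E' → StExp.Step (SExp.proj E) a (SExp.proj E')) :=
  ⟨fun _ h => ⟨h.isStExp, h.term_proj⟩, fun _ _ a h => h.step_proj a rfl⟩
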